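/- arXiv:1911.08418 — 11 statements merged into one kernel-verified Lean document; each statement's English description precedes it below -/
import Mathlib

section
/- Let 0 ≤ ε_1, …, ε_s ≤ ε_max with s ≥ 1 and ε_max > 0, and E = Σ_{r=1}^s ε_r. If E ≥ 2 ε_max, then Σ_{r=1}^s (s − r + 1) ε_r ≥ E² / (4 ε_max). -/
open Finset

private lemma sum_prefix_eq (a : ℕ → ℝ) :
    ∀ n : ℕ, ∑ j ∈ range n, (∑ k ∈ range (j + 1), a k)
      = ∑ k ∈ range n, ((n - k : ℕ) : ℝ) * a k := by
  intro n
  induction n with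
  | zero => simp
  | succ n ih =>
      rw [sum_range_succ, ih, sum_range_succ (f := fun k => ((n + 1 - k : ℕ) : ℝ) * a k),
        sum_range_succ (f := a)]
      have h1 : ∀ k ∈ range n, ((n + 1 - k : ℕ) : ℝ) * a k
          = ((n - k : ℕ) : ℝ) * a k + a k := by
        intro k hk
        have hk' : k ≤ n := le_of_lt (mem_range.mp hk)
        have : (n + 1 - k : ℕ) = (n - k) + 1 := by omega
        rw [this]
        push_cast
        ring
      rw [sum_congr rfl h1, sum_add_distrib]
      simp
      ring

/-- If 0 ≤ ε_r ≤ ε_max, ε_max > 0, E = ∑_r ε_r and E ≥ 2 ε_max, then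
∑_{r=1}^s (s−r+1) ε_r ≥ E² / (4 ε_max). -/
theorem weighted_sum_lower {s : ℕ} (hs : 1 ≤ s) (εmax : ℝ) (hεmax : 0 < εmax)
    (ε : Fin s → ℝ) (hε : ∀ r, 0 ≤ ε r ∧ ε r ≤ εmax)
    (hE : 2 * εmax ≤ ∑ r : Fin s, ε r) :
    (∑ r : Fin s, ε r) ^ 2 / (4 * εmax) ≤ ∑ r : Fin s, ((s : ℝ) - (r : ℕ)) * ε r := by
  set E : ℝ := ∑ r : Fin s, ε r with hEdef
  set a : ℕ → ℝ := fun k => if h : k < s then ε ⟨k, h⟩ else 0 with ha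
  have ha_nonneg : ∀ k, 0 ≤ a k := by
    intro k; simp only [ha]
    split
    · exact (hε _).1
    · exact le_refl 0
  have ha_le : ∀ k, a k ≤ εmax := by
    intro k; simp only [ha]
    split
    · exact (hε _).2
    · exact le_of_lt hεmax
  have hEa : E = ∑ k ∈ range s, a k := by
    rw [hEdef, ← Fin.sum_univ_eq_sum_range a s]
    refine sum_congr rfl fun r _ => ?_
    simp [ha, r.isLt]
  have hE0 : 0 < E := lt_of_lt_of_le (by linarith) hE
  -- rewrite RHS
  have hRHS : ∑ r : Fin s, ((s : ℝ) - (r : ℕ)) * ε r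
      = ∑ j ∈ range s, (∑ k ∈ range (j + 1), a k) := by
    rw [sum_prefix_eq a s, ← Fin.sum_univ_eq_sum_range (fun k => ((s - k : ℕ) : ℝ) * a k) s]
    refine sum_congr rfl fun r _ => ?_
    have hr : (r : ℕ) < s := r.isLt
    have : ((s - (r : ℕ) : ℕ) : ℝ) = (s : ℝ) - (r : ℕ) := by
      rw [Nat.cast_sub hr.le]
    rw [this]
    congr 1
    simp [ha, hr]
  rw [hRHS]
  -- prefix sums are nonneg
  have hPnonneg : ∀ j, 0 ≤ ∑ k ∈ range (j + 1), a k :=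
    fun j => sum_nonneg fun k _ => ha_nonneg k
  -- E ≤ s * εmax
  have hEle : E ≤ (s : ℝ) * εmax := by
    rw [hEa]
    calc ∑ k ∈ range s, a k ≤ ∑ k ∈ range s, εmax := sum_le_sum fun k _ => ha_le k
    _ = (s : ℝ) * εmax := by simp [mul_comm]
  set m : ℕ := ⌈E / (2 * εmax)⌉₊ with hm
  have hm1 : 1 ≤ m := Nat.one_le_ceil_iff.mpr (div_pos hE0 (by linarith))
  have hms : m ≤ s := by
    apply Nat.ceil_le.mpr
    rw [div_le_iff₀ (by linarith)]
    nlinarith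
  have hmge : E / (2 * εmax) ≤ (m : ℝ) := Nat.le_ceil _
  have hmlt : (m : ℝ) - 1 < E / (2 * εmax) := by
    by_contra h
    push_neg at h
    have : m ≤ m - 1 := Nat.ceil_le.mpr (by push_cast [Nat.cast_sub hm1]; linarith)
    omega
  -- each prefix sum with j ≥ s - m is ≥ E/2
  have hkey : ∀ j ∈ Ico (s - m) s, E / 2 ≤ ∑ k ∈ range (j + 1), a k := by
    intro j hj
    rw [mem_Ico] at hj
    have hj1 : j + 1 ≤ s := hj.2
    have hsplit : ∑ k ∈ range (j + 1), a k + ∑ k ∈ Ico (j + 1) s, a k = E := by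
      rw [hEa]; simp only [range_eq_Ico]
      exact sum_Ico_consecutive a (Nat.zero_le _) hj1
    have htail : ∑ k ∈ Ico (j + 1) s, a k ≤ ((s - (j + 1) : ℕ) : ℝ) * εmax := by
      calc ∑ k ∈ Ico (j + 1) s, a k ≤ ∑ k ∈ Ico (j + 1) s, εmax :=
            sum_le_sum fun k _ => ha_le k
      _ = ((s - (j + 1) : ℕ) : ℝ) * εmax := by
            rw [sum_const, Nat.card_Ico, nsmul_eq_mul]
    have hcard : (s - (j + 1) : ℕ) ≤ m - 1 := by omega
    have h1 : ((s - (j + 1) : ℕ) : ℝ) ≤ (m : ℝ) - 1 := by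
      calc ((s - (j + 1) : ℕ) : ℝ) ≤ ((m - 1 : ℕ) : ℝ) := Nat.cast_le.mpr hcard
      _ = (m : ℝ) - 1 := by rw [Nat.cast_sub hm1]; simp
    have h2 : ((s - (j + 1) : ℕ) : ℝ) * εmax ≤ E / 2 := by
      calc ((s - (j + 1) : ℕ) : ℝ) * εmax ≤ ((m : ℝ) - 1) * εmax := by nlinarith
      _ ≤ E / (2 * εmax) * εmax := by nlinarith
      _ = E / 2 := by field_simp
    linarith
  -- put it together
  calc E ^ 2 / (4 * εmax) = E / (2 * εmax) * (E / 2) := by field_simp; ring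
  _ ≤ (m : ℝ) * (E / 2) := by nlinarith
  _ = ∑ _j ∈ Ico (s - m) s, (E / 2) := by
      rw [sum_const, Nat.card_Ico, nsmul_eq_mul]
      congr 1
      rw [Nat.sub_sub_self hms]
  _ ≤ ∑ j ∈ Ico (s - m) s, (∑ k ∈ range (j + 1), a k) := sum_le_sum hkey
  _ ≤ ∑ j ∈ range s, (∑ k ∈ range (j + 1), a k) := by
      apply sum_le_sum_of_subset_of_nonneg
      · rw [range_eq_Ico]
        exact Ico_subset_Ico (Nat.zero_le _) le_rfl
      · exact fun j _ _ => hPnonneg j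
end

section
/- Let p, q ∈ ℝ^n, i, j, i', j' ∈ [n] with A diagonal, q_j ≥ q_{j'}, p_i ≤ p_{i'}, and after the updates p' = p + A_{jj} e_j, q' = q + A_{ii} e_i, we have q'_{j'} ≥ q'_j and p'_{i'} ≤ p'_i. Let ψ = max_h q_h − min_h p_h attained at j and i respectively, and ψ' = q'_{j'} − p'_{i'}. Then 0 ≤ ψ' − ψ ≤ max_h A_{hh}, and if (i', j') = (i, j) then ψ' = ψ. -/
/-- One-round change of the duality gap in the diagonal FP dynamic:
0 ≤ ψ' − ψ ≤ max_h A_{hh}, and ψ' = ψ if the round type is unchanged. -/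
theorem dualityGap_step {n : ℕ} (d : Fin n → ℝ) (hd : ∀ h, 0 < d h)
    (dmax : ℝ) (hdmax : ∀ h, d h ≤ dmax)
    (p q : Fin n → ℝ) (i j i' j' : Fin n)
    (hi : ∀ h, p i ≤ p h) (hj : ∀ h, q h ≤ q j)
    (p' q' : Fin n → ℝ)
    (hp' : p' = fun h => p h + if h = j then d j else 0)
    (hq' : q' = fun h => q h + if h = i then d i else 0)
    (hi' : ∀ h, p' i' ≤ p' h) (hj' : ∀ h, q' h ≤ q' j') :
    (0 ≤ (q' j' - p' i') - (q j - p i) ∧ (q' j' - p' i') - (q j - p i) ≤ dmax) ∧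
      ((i' = i ∧ j' = j) → q' j' - p' i' = q j - p i) := by
  have e1 := congrFun hq' j
  have e2 := congrFun hq' j'
  have e3 := congrFun hp' i
  have e4 := congrFun hp' i'
  beta_reduce at e1 e2 e3 e4
  have hA := hj' j
  have hB := hi' i
  have hC := hi i'
  have hD := hj j'
  have h5 := hd i
  have h6 := hdmax i
  have hE : p i' ≤ p' i' := by rw [e4]; split <;> linarith [hd j]
  have hF : q' j' ≤ q j' + d i := by rw [e2]; split <;> linarith
  refine ⟨⟨?_, ?_⟩, ?_⟩
  · by_cases hij : i = j
    · subst hij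
      simp only [if_pos rfl] at e1 e3
      linarith
    · rw [if_neg (fun h => hij h.symm)] at e1
      rw [if_neg hij] at e3
      linarith
  · linarith
  · rintro ⟨rfl, rfl⟩
    by_cases hij : i' = j'
    · subst hij
      simp only [if_pos rfl] at e2 e4
      linarith
    · rw [if_neg (fun h => hij h.symm)] at e2
      rw [if_neg hij] at e4
      linarith
end

section
/- Under lexicographic tie-breaking and a diagonal payoff matrix A with positive entries, if the Fictitious Play dynamic plays a sync round of type (i,i) at time t (both players best-respond with action i), then at time t+1 the y-player still plays action i; hence round t+1 is either a sync (i,i) round or a split (j,i) round with j ≠ i. -/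
/-- After a sync (i,i) round in the diagonal FP dynamic with lexicographic
tie-breaking, the y-player's next (tie-broken) best response is still i;
hence the next round is sync (i,i) or split (j,i) with j ≠ i. -/
theorem sync_round_y_repeats {n : ℕ} (d : Fin n → ℝ) (hd : ∀ h, 0 < d h)
    (σx σy : Equiv.Perm (Fin n)) (p q : Fin n → ℝ) (i : Fin n)
    -- round t is sync (i,i): x plays i (lexicographic argmin of p)
    (hxmin : ∀ h, p i ≤ p h) (hxtie : ∀ h, p h = p i → σx i ≤ σx h)
    -- and y plays i (lexicographic argmax of q)
    (hymax : ∀ h, q h ≤ q i) (hytie : ∀ h, q h = q i → σy i ≤ σy h) :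
    -- at round t+1, with q' = q + d i · e_i, the y-player's choice is i
    ∀ j' : Fin n,
      (∀ h, (q h + if h = i then d i else 0) ≤ (q j' + if j' = i then d i else 0)) →
      (∀ h, (q h + if h = i then d i else 0) = (q j' + if j' = i then d i else 0) →
        σy j' ≤ σy h) →
      j' = i := by
  intro j' hmax _
  by_contra hne
  have h1 := hmax i
  simp only [if_pos, if_neg hne, eq_self_iff_true, if_true, add_zero] at h1
  have h2 := hymax j'
  have h3 := hd i
  linarith
end

section
/- Under lexicographic tie-breaking and a diagonal payoff matrix A with positive entries, if the Fictitious Play dynamic plays a split round of type (j,i) at time t (x plays j, y plays i, with j ≠ i), then at time t+1 the x-player still plays action j; hence round t+1 is either a split (j,i) round or a sync (j,j) round. -/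
/-- After a split (j,i) round in the diagonal FP dynamic with lexicographic
tie-breaking, the x-player's next (tie-broken) best response is still j;
hence the next round is split (j,i) or sync (j,j). -/
theorem split_round_x_repeats {n : ℕ} (d : Fin n → ℝ) (hd : ∀ h, 0 < d h)
    (σx σy : Equiv.Perm (Fin n)) (p q : Fin n → ℝ) (i j : Fin n) (hij : j ≠ i)
    -- round t is split (j,i): x plays j (lexicographic argmin of p)
    (hxmin : ∀ h, p j ≤ p h) (hxtie : ∀ h, p h = p j → σx j ≤ σx h)
    -- and y plays i (lexicographic argmax of q)
    (hymax : ∀ h, q h ≤ q i) (hytie : ∀ h, q h = q i → σy i ≤ σy h) :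
    -- at round t+1, with p' = p + d i · e_i, the x-player's choice is j
    ∀ i' : Fin n,
      (∀ h, (p i' + if i' = i then d i else 0) ≤ (p h + if h = i then d i else 0)) →
      (∀ h, (p h + if h = i then d i else 0) = (p i' + if i' = i then d i else 0) →
        σx i' ≤ σx h) →
      i' = j := by
  intro i' hmin htie
  have hmj := hmin j
  simp only [if_neg hij] at hmj
  have hi'ne : i' ≠ i := by
    intro hii
    subst hii
    simp only [if_pos rfl, if_true, add_zero] at hmj
    have := hxmin i'
    have := hd i'
    linarith
  simp only [if_neg hi'ne, add_zero] at hmj htie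
  have hpe : p i' = p j := le_antisymm hmj (hxmin i')
  have h1 : σx j ≤ σx i' := hxtie i' hpe
  have h2 : σx i' ≤ σx j := by
    have := htie j
    simp only [if_neg hij, add_zero] at this
    exact this hpe.symm
  exact σx.injective (le_antisymm h2 h1)
end

section
/- Suppose in the diagonal Fictitious Play dynamic, rounds {t, …, t+s−1} form a sync (i,i) phase (both players play i for s rounds) and round t+s is a split (j,i) round with j ≠ i. Let ε = s A_{ii} − u^{(t)}_j where u^{(t)}_j = p^{(t)}_j − min_h p^{(t)}_h. Then 0 ≤ ε ≤ A_{ii}. -/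
/-- If rounds {t,…,t+s−1} form a sync (i,i) phase and round t+s is a split (j,i)
round with j ≠ i, then ε = s A_{ii} − u^{(t)}_j satisfies 0 ≤ ε ≤ A_{ii}. -/
theorem sync_phase_eps_bounds {n : ℕ} (d : Fin n → ℝ) (hd : ∀ h, 0 < d h)
    (p : Fin n → ℝ) (i j : Fin n) (hij : j ≠ i) (s : ℕ) (hs : 1 ≤ s)
    -- at time t, the minimum of p is attained at i
    (hmin : ∀ h, p i ≤ p h)
    -- at time t+s−1 (a sync round), the minimum of p + (s−1) d_i e_i is still at i
    (hmin' : ∀ h, (p i + (s - 1 : ℝ) * d i) ≤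
      (p h + if h = i then (s - 1 : ℝ) * d i else 0))
    -- at time t+s (a split (j,i) round), the minimum of p + s d_i e_i is at j
    (hminS : ∀ h, (p j + if j = i then (s : ℝ) * d i else 0) ≤
      (p h + if h = i then (s : ℝ) * d i else 0)) :
    0 ≤ (s : ℝ) * d i - (p j - p i) ∧ (s : ℝ) * d i - (p j - p i) ≤ d i := by
  have h1 := hminS i
  have h2 := hmin' j
  simp [hij] at h1 h2
  constructor <;> nlinarith [hd i]
end

section
/- Suppose in the diagonal Fictitious Play dynamic, rounds {t, …, t+s−1} form a split (j,i) phase (x plays j, y plays i, j ≠ i) and round t+s is a sync (j,j) round. Let ε = s A_{jj} − v^{(t)}_j where v^{(t)}_j = max_h q^{(t)}_h − q^{(t)}_j. Then 0 ≤ ε ≤ A_{jj} and the duality gap satisfies ψ^{(t+s)} − ψ^{(t)} = ε. -/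
/-- Over a split (j,i) phase of length s followed by a sync (j,j) round,
ε = s A_{jj} − v^{(t)}_j satisfies 0 ≤ ε ≤ A_{jj}, and the duality gap
increases by exactly ε. -/
theorem split_phase_gap_increase {n : ℕ} (d : Fin n → ℝ) (hd : ∀ h, 0 < d h)
    (p q : Fin n → ℝ) (i j : Fin n) (hij : j ≠ i) (s : ℕ) (hs : 1 ≤ s)
    -- at time t, min of p is at j and max of q is at i
    (hmin : ∀ h, p j ≤ p h) (hmax : ∀ h, q h ≤ q i)
    -- at time t+s−1 (a split round), max of q + (s−1) d_j e_j is still at i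
    (hmax' : ∀ h, (q h + if h = j then (s - 1 : ℝ) * d j else 0) ≤ q i)
    -- at time t+s: p^{(t+s)} = p + s d_i e_i, q^{(t+s)} = q + s d_j e_j,
    -- min of p^{(t+s)} is at j and max of q^{(t+s)} is at j
    (hminS : ∀ h, (p j + if j = i then (s : ℝ) * d i else 0) ≤
      (p h + if h = i then (s : ℝ) * d i else 0))
    (hmaxS : ∀ h, (q h + if h = j then (s : ℝ) * d j else 0) ≤ (q j + (s : ℝ) * d j)) :
    (0 ≤ (s : ℝ) * d j - (q i - q j) ∧ (s : ℝ) * d j - (q i - q j) ≤ d j) ∧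
    ((q j + (s : ℝ) * d j) - (p j + if j = i then (s : ℝ) * d i else 0)) - (q i - p j)
      = (s : ℝ) * d j - (q i - q j) := by
  have h1 := hmaxS i
  have h2 := hmax' j
  simp [hij, Ne.symm hij] at h1 h2 ⊢
  constructor
  · constructor
    · linarith
    · linarith
  · ring
end

section
/- Define the weight vector w^{(t)}_ℓ = (u^{(t)}_ℓ + v^{(t)}_ℓ)/A_{ℓℓ}, where u^{(t)}_ℓ = p^{(t)}_ℓ − min_h p^{(t)}_h and v^{(t)}_ℓ = max_h q^{(t)}_h − q^{(t)}_ℓ. Suppose rounds {t, …, t+s−1} form a sync-split(i→j) pair (a sync (i,i) phase followed by a split (j,i) phase, j ≠ i). Let ε = ψ^{(t+s)} − ψ^{(t)}. Then 0 ≤ ε ≤ 2 A_max, w^{(t+s)}_ℓ = w^{(t)}_ℓ + ε/A_{ℓℓ} for ℓ ∉ {i,j}, w^{(t+s)}_i = w^{(t)}_j + (1/A_{ii} + 1/A_{jj}) ε, and w^{(t+s)}_j = w^{(t)}_i = 0. -/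
/-- Evolution of the weight vector over a sync-split(i→j) pair:
0 ≤ ε ≤ 2 A_max, w^{(t+s)}_ℓ = w^{(t)}_ℓ + ε/A_{ℓℓ} for ℓ ∉ {i,j},
w^{(t+s)}_i = w^{(t)}_j + (1/A_{ii} + 1/A_{jj}) ε, and w^{(t+s)}_j = w^{(t)}_i = 0. -/
theorem weight_vector_sync_split {n : ℕ} (d : Fin n → ℝ) (hd : ∀ h, 0 < d h)
    (Amax : ℝ) (hAmax : ∀ h, d h ≤ Amax)
    (p q : Fin n → ℝ) (i j : Fin n) (hij : j ≠ i)
    (k s : ℕ) (hk : 1 ≤ k) (hks : k < s)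
    -- state at time t+s after k sync (i,i) rounds and s−k split (j,i) rounds
    (pS qS : Fin n → ℝ)
    (hpS : pS = fun h => p h + (if h = i then (s : ℝ) * d i else 0))
    (hqS : qS = fun h => q h + (if h = i then (k : ℝ) * d i else 0) +
      (if h = j then ((s : ℝ) - (k : ℝ)) * d j else 0))
    -- time t: min of p and max of q at i
    (hmin : ∀ h, p i ≤ p h) (hmax : ∀ h, q h ≤ q i)
    -- time t+k−1 (last sync round): min of p + (k−1) d_i e_i at i
    (hmink : ∀ h, (p i + ((k : ℝ) - 1) * d i) ≤
      (p h + if h = i then ((k : ℝ) - 1) * d i else 0))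
    -- time t+k (first split round): min of p + k d_i e_i at j, max of q + k d_i e_i at i
    (hminK : ∀ h, (p j + if j = i then (k : ℝ) * d i else 0) ≤
      (p h + if h = i then (k : ℝ) * d i else 0))
    (hmaxK : ∀ h, (q h + if h = i then (k : ℝ) * d i else 0) ≤ (q i + (k : ℝ) * d i))
    -- time t+s−1 (last split round): max of q + k d_i e_i + (s−1−k) d_j e_j at i
    (hmaxs : ∀ h, (q h + (if h = i then (k : ℝ) * d i else 0) +
        (if h = j then ((s : ℝ) - 1 - (k : ℝ)) * d j else 0)) ≤ (q i + (k : ℝ) * d i))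
    -- time t+s (a sync (j,j) round): min of pS at j and max of qS at j
    (hminS : ∀ h, pS j ≤ pS h) (hmaxS : ∀ h, qS h ≤ qS j)
    -- weight vectors and the gap increase ε
    (w wS : Fin n → ℝ) (ε : ℝ)
    (hw : w = fun ℓ => ((p ℓ - p i) + (q i - q ℓ)) / d ℓ)
    (hwS : wS = fun ℓ => ((pS ℓ - pS j) + (qS j - qS ℓ)) / d ℓ)
    (hε : ε = (qS j - pS j) - (q i - p i)) :
    (0 ≤ ε ∧ ε ≤ 2 * Amax) ∧
    (∀ ℓ, ℓ ≠ i → ℓ ≠ j → wS ℓ = w ℓ + ε / d ℓ) ∧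
    wS i = w j + (1 / d i + 1 / d j) * ε ∧
    wS j = 0 ∧ w i = 0 := by

  subst hpS hqS hw hwS hε
  have hdi := (hd i).ne'
  have hdj := (hd j).ne'
  refine ⟨⟨?_, ?_⟩, ?_, ?_, ?_, ?_⟩
  · have h1 := hmaxS i
    have h2 := hminK i
    simp only [hij, Ne.symm hij, if_true, if_false, ite_true, ite_false, eq_self_iff_true, add_zero] at h1 h2 ⊢
    linarith
  · have h1 := hmaxs j
    have h2 := hmink j
    simp only [hij, Ne.symm hij, if_true, if_false, ite_true, ite_false, eq_self_iff_true, add_zero] at h1 h2 ⊢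
    have e1 : ((s:ℝ) - (k:ℝ)) * d j = ((s:ℝ) - 1 - (k:ℝ)) * d j + d j := by ring
    have e2 : (k:ℝ) * d i = ((k:ℝ) - 1) * d i + d i := by ring
    have := hAmax i
    have := hAmax j
    linarith
  · intro ℓ hℓi hℓj
    have hdl := (hd ℓ).ne'
    simp only [hℓi, hℓj, hij, Ne.symm hij, if_true, if_false, ite_true, ite_false, eq_self_iff_true, add_zero]
    field_simp
    ring
  · simp only [hij, Ne.symm hij, if_true, if_false, ite_true, ite_false, eq_self_iff_true, add_zero]
    field_simp
    ring
  · simp only [hij, Ne.symm hij, if_true, if_false, ite_true, ite_false, eq_self_iff_true, add_zero]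
    ring
  · simp only [hij, Ne.symm hij, if_true, if_false, ite_true, ite_false, eq_self_iff_true, add_zero]
    ring
end

section
/- In the diagonal Fictitious Play dynamic, let T_1, T_2, … denote the starting times of the sync-split pairs, let the s-th pair be a sync-split(i_s → i_{s+1}) pair, and let w be the weight vector. Then for all s ≥ 1 and all i ≠ i_s: (ψ(x^{(T_s)}, y^{(T_s)}) − ψ(x^{(T_1)}, y^{(T_1)}))/A_max ≤ w^{(T_s)}_i ≤ 2(ψ(x^{(T_s)}, y^{(T_s)}) − ψ(x^{(T_1)}, y^{(T_1)}))/A_min + 3κ + 2, where κ = A_max/A_min. -/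
/-- At the start of each sync-split pair, the entries of the weight vector are
comparable to the duality gap:
(ψ_s − ψ_1)/A_max ≤ w^{(T_s)}_i ≤ 2(ψ_s − ψ_1)/A_min + 3κ + 2 for all i ≠ i_s. -/
theorem weight_vs_gap {n : ℕ} (Amin Amax : ℝ) (hAmin : 0 < Amin) (hA : Amin ≤ Amax)
    (κ : ℝ) (hκ : κ = Amax / Amin)
    -- w s = weight vector at start time T_s of the s-th sync-split pair,
    -- ψ s = duality gap there, idx s = i_s (the s-th pair is sync-split(i_s → i_{s+1}))
    (w : ℕ → Fin n → ℝ) (ψ : ℕ → ℝ) (idx : ℕ → Fin n)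
    (hidx : ∀ s, 1 ≤ s → idx (s + 1) ≠ idx s)
    (hεpos : ∀ s, 1 ≤ s → 0 ≤ ψ (s + 1) - ψ s ∧ ψ (s + 1) - ψ s ≤ 2 * Amax)
    (hrest : ∀ s, 1 ≤ s → ∀ ℓ, ℓ ≠ idx s → ℓ ≠ idx (s + 1) →
      (ψ (s + 1) - ψ s) / Amax ≤ w (s + 1) ℓ - w s ℓ ∧
      w (s + 1) ℓ - w s ℓ ≤ (ψ (s + 1) - ψ s) / Amin)
    (hswap : ∀ s, 1 ≤ s →
      2 * (ψ (s + 1) - ψ s) / Amax ≤ w (s + 1) (idx s) - w s (idx (s + 1)) ∧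
      w (s + 1) (idx s) - w s (idx (s + 1)) ≤ 2 * (ψ (s + 1) - ψ s) / Amin)
    (hzero : ∀ s, 1 ≤ s → w (s + 1) (idx (s + 1)) = 0 ∧ w s (idx s) = 0)
    (hinit : ∀ i, 0 ≤ w 1 i ∧ w 1 i ≤ 3 * κ + 2) :
    ∀ s, 1 ≤ s → ∀ i, i ≠ idx s →
      (ψ s - ψ 1) / Amax ≤ w s i ∧
      w s i ≤ 2 * (ψ s - ψ 1) / Amin + 3 * κ + 2 := by
  have hAmax : 0 < Amax := lt_of_lt_of_le hAmin hA
  intro s hs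
  induction s, hs using Nat.le_induction with
  | base =>
    intro i hi
    constructor
    · simp [div_nonneg, (hinit i).1]
    · have h0 : 2 * (ψ 1 - ψ 1) / Amin = 0 := by simp
      have := (hinit i).2; linarith
  | succ s hs IH =>
    intro i hi
    have hε := hεpos s hs
    have hεA : 0 ≤ (ψ (s+1) - ψ s) / Amax := div_nonneg hε.1 hAmax.le
    have hεm : 0 ≤ (ψ (s+1) - ψ s) / Amin := div_nonneg hε.1 hAmin.le
    by_cases hcase : i = idx s
    · subst hcase
      have hIH := IH (idx (s+1)) (hidx s hs)
      have hsw := hswap s hs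
      constructor
      · have h1 : (ψ (s+1) - ψ 1) / Amax ≤ (ψ s - ψ 1) / Amax + 2 * (ψ (s+1) - ψ s) / Amax := by
          rw [← add_div, div_le_div_iff₀ hAmax hAmax]
          nlinarith [hε.1]
        linarith [hsw.1, hIH.1]
      · have h2 : 2 * (ψ s - ψ 1) / Amin + 2 * (ψ (s+1) - ψ s) / Amin ≤ 2 * (ψ (s+1) - ψ 1) / Amin := by
          rw [← add_div, div_le_div_iff₀ hAmin hAmin]
          nlinarith
        linarith [hsw.2, hIH.2]
    · have hIH := IH i hcase
      have hr := hrest s hs i hcase hi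
      constructor
      · have h1 : (ψ (s+1) - ψ 1) / Amax = (ψ s - ψ 1) / Amax + (ψ (s+1) - ψ s) / Amax := by
          rw [← add_div]; ring_nf
        linarith [hr.1, hIH.1]
      · have h2 : 2 * (ψ s - ψ 1) / Amin + (ψ (s+1) - ψ s) / Amin ≤ 2 * (ψ (s+1) - ψ 1) / Amin := by
          rw [← add_div, div_le_div_iff₀ hAmin hAmin]
          nlinarith
        linarith [hr.2, hIH.2]
end

section
/- In the diagonal Fictitious Play dynamic, if rounds {t, …, t+ℓ−1} form a sync-split(i→j) pair with i ≠ j, then the length ℓ satisfies w^{(t)}_j ≤ ℓ ≤ (κ+1) w^{(t)}_j + κ + 2, where w^{(t)}_j = (u^{(t)}_j + v^{(t)}_j)/A_{jj} and κ = A_max/A_min. -/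
/-- The length ℓ of a sync-split(i→j) pair satisfies
w^{(t)}_j ≤ ℓ ≤ (κ+1) w^{(t)}_j + κ + 2, where w^{(t)}_j = (u_j + v_j)/A_{jj}
and κ = A_max/A_min. -/
theorem sync_split_length {n : ℕ} (Amin Amax : ℝ) (hAmin : 0 < Amin) (hA : Amin ≤ Amax)
    (κ : ℝ) (hκ : κ = Amax / Amin)
    (dii djj : ℝ) (hdii : Amin ≤ dii ∧ dii ≤ Amax) (hdjj : Amin ≤ djj ∧ djj ≤ Amax)
    -- u = u^{(t)}_j, v = v^{(t)}_j, and the weight w^{(t)}_j = (u+v)/A_{jj}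
    (u v wj : ℝ) (hu : 0 ≤ u) (hv : 0 ≤ v) (hwj : wj = (u + v) / djj)
    -- the sync (i,i) phase has length k with 0 ≤ k ≤ 1 + u_j/A_{ii}
    (k ℓ : ℕ) (hkℓ : k ≤ ℓ) (hk : (k : ℝ) ≤ 1 + u / dii)
    -- at the end of the sync phase, w^{(t+k)}_j = w^{(t)}_j + ε₁/A_{jj}, ε₁ ∈ [0, A_max]
    (ε₁ wtk : ℝ) (hε₁ : 0 ≤ ε₁ ∧ ε₁ ≤ Amax) (hwtk : wtk = wj + ε₁ / djj)
    -- the split (j,i) phase has length ℓ−k with w^{(t+k)}_j ≤ ℓ−k ≤ 1 + w^{(t+k)}_j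
    (hsplit : wtk ≤ ((ℓ : ℝ) - (k : ℝ)) ∧ ((ℓ : ℝ) - (k : ℝ)) ≤ 1 + wtk) :
    wj ≤ (ℓ : ℝ) ∧ (ℓ : ℝ) ≤ (κ + 1) * wj + κ + 2 := by
  obtain ⟨hd1, hd2⟩ := hdii
  obtain ⟨hd3, hd4⟩ := hdjj
  obtain ⟨he1, he2⟩ := hε₁
  obtain ⟨hs1, hs2⟩ := hsplit
  have hdii0 : 0 < dii := lt_of_lt_of_le hAmin hd1
  have hdjj0 : 0 < djj := lt_of_lt_of_le hAmin hd3
  have hAmax0 : 0 < Amax := lt_of_lt_of_le hAmin hA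
  have hwj0 : 0 ≤ wj := by
    rw [hwj]; positivity
  constructor
  · have : wj ≤ wtk := by
      rw [hwtk]; nlinarith [div_nonneg he1 hdjj0.le]
    have hk0 : (0:ℝ) ≤ (k:ℝ) := Nat.cast_nonneg k
    linarith
  · -- ℓ ≤ k + (ℓ - k) ≤ (1 + u/dii) + (1 + wtk)
    have h1 : (ℓ:ℝ) ≤ (1 + u / dii) + (1 + wj + ε₁ / djj) := by
      rw [hwtk] at hs2; linarith
    have hκ0 : 1 ≤ κ := by
      rw [hκ]; exact (one_le_div hAmin).mpr hA
    have h2 : ε₁ / djj ≤ κ := by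
      rw [hκ]
      calc ε₁ / djj ≤ Amax / djj := by gcongr
        _ ≤ Amax / Amin := by gcongr
    have h3 : u / dii ≤ κ * wj := by
      rw [hκ, hwj]
      rw [div_mul_div_comm]
      rw [div_le_div_iff₀ hdii0 (by positivity)]
      nlinarith [mul_le_mul hd1 hd4 hdjj0.le hdii0.le, mul_nonneg hu (mul_nonneg hdii0.le hAmax0.le), mul_nonneg hv (mul_nonneg hdii0.le hAmax0.le)]
    linarith
end

section
/- Suppose a sequence s ↦ T_s of real numbers and a sequence s ↦ ψ_s satisfy, for constants A_max ≥ A_min > 0 with κ = A_max/A_min: T_{s+1} − T_1 ≥ (1/A_max) Σ_{r=1}^s (s−r+1) ε_r where ε_r = ψ_{r+1} − ψ_r ∈ [0, 2A_max], and T_{s+1} ≥ T_1 + 2 for s ≥ 1. Then ψ_{s+1} − ψ_1 ≤ 3 A_max √(T_{s+1} − T_1) for all s ≥ 1. -/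
open Finset

/-- Upper bound on the duality gap over sync-split pairs: if
T_{s+1} − T_1 ≥ (1/A_max) ∑_{r=1}^s (s−r+1) ε_r with ε_r = ψ_{r+1} − ψ_r ∈ [0, 2A_max],
and T_{s+1} ≥ T_1 + 2, then ψ_{s+1} − ψ_1 ≤ 3 A_max √(T_{s+1} − T_1). -/
theorem gap_sqrt_upper (Amax : ℝ) (hAmax : 0 < Amax) (T ψ : ℕ → ℝ)
    (hε : ∀ r, 1 ≤ r → 0 ≤ ψ (r + 1) - ψ r ∧ ψ (r + 1) - ψ r ≤ 2 * Amax)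
    (hT : ∀ s, 1 ≤ s → (1 / Amax) *
      (∑ r ∈ Finset.Icc 1 s, ((s - r + 1 : ℕ) : ℝ) * (ψ (r + 1) - ψ r))
        ≤ T (s + 1) - T 1)
    (hT2 : ∀ s, 1 ≤ s → T 1 + 2 ≤ T (s + 1)) :
    ∀ s, 1 ≤ s → ψ (s + 1) - ψ 1 ≤ 3 * Amax * Real.sqrt (T (s + 1) - T 1) := by
  intro s hs
  have htel : ∀ n : ℕ, (∑ r ∈ Finset.Ioc 0 n, (ψ (r + 1) - ψ r)) = ψ (n + 1) - ψ 1 := by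
    intro n
    induction n with
    | zero => simp
    | succ k ih =>
      rw [Finset.sum_Ioc_succ_top (Nat.zero_le _), ih]; ring
  set E := ψ (s + 1) - ψ 1 with hE
  set D := T (s + 1) - T 1 with hD
  have hD2 : 2 ≤ D := by have := hT2 s hs; rw [hD]; linarith
  have hDnn : (0:ℝ) ≤ D := by linarith
  have hsqrtD : Real.sqrt 2 ≤ Real.sqrt D := Real.sqrt_le_sqrt hD2
  have h43 : (4:ℝ)/3 ≤ Real.sqrt 2 := by
    rw [show (4:ℝ)/3 = Real.sqrt ((4/3)^2) by rw [Real.sqrt_sq (by norm_num)]]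
    apply Real.sqrt_le_sqrt; norm_num
  by_cases hcase : E ≤ 4 * Amax
  · calc E ≤ 4 * Amax := hcase
      _ = 3 * Amax * (4/3) := by ring
      _ ≤ 3 * Amax * Real.sqrt D :=
          mul_le_mul_of_nonneg_left (le_trans h43 hsqrtD) (by positivity)
  · push_neg at hcase
    have hE4 : 4 * Amax ≤ E := le_of_lt hcase
    have hEpos : 0 < E := by linarith
    have hA4 : (0:ℝ) < 4 * Amax := by linarith
    set t := ⌊E / (4 * Amax)⌋₊ + 1 with ht
    -- E ≤ 2 Amax s
    have hEle : E ≤ 2 * Amax * s := by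
      rw [hE, ← htel s]
      calc (∑ r ∈ Finset.Ioc 0 s, (ψ (r + 1) - ψ r))
          ≤ ∑ _r ∈ Finset.Ioc 0 s, 2 * Amax :=
            Finset.sum_le_sum (fun r hr => (hε r (by simp [Finset.mem_Ioc] at hr; omega)).2)
        _ = 2 * Amax * s := by
            rw [Finset.sum_const, Nat.card_Ioc, Nat.sub_zero, nsmul_eq_mul]; ring
    have hts : t ≤ s := by
      have hlt : E / (4 * Amax) < (s:ℝ) := by
        rw [div_lt_iff₀ hA4]
        have hs1 : (1:ℝ) ≤ (s:ℝ) := by exact_mod_cast hs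
        nlinarith
      have := (Nat.floor_lt (by positivity : (0:ℝ) ≤ E / (4 * Amax))).mpr hlt
      omega
    -- swap double sum
    have hswap : ∑ j ∈ Finset.Ioc 0 s, ∑ r ∈ Finset.Ioc 0 j, (ψ (r + 1) - ψ r)
        = ∑ r ∈ Finset.Icc 1 s, ((s - r + 1 : ℕ) : ℝ) * (ψ (r + 1) - ψ r) := by
      rw [Finset.sum_comm' (s' := fun r => Finset.Icc r s) (t' := Finset.Icc 1 s)
        (fun j r => by simp only [Finset.mem_Ioc, Finset.mem_Icc]; omega)]
      apply Finset.sum_congr rfl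
      intro r hr
      simp only [Finset.mem_Icc] at hr
      rw [Finset.sum_const, Nat.card_Icc, nsmul_eq_mul]
      congr 1
      have : s + 1 - r = s - r + 1 := by omega
      rw [this]
    -- lower bound on partial sums over the last t indices
    have hPj : ∀ j ∈ Finset.Icc (s + 1 - t) s,
        E / 2 ≤ ∑ r ∈ Finset.Ioc 0 j, (ψ (r + 1) - ψ r) := by
      intro j hj
      simp only [Finset.mem_Icc] at hj
      have hsplit : (∑ r ∈ Finset.Ioc 0 j, (ψ (r + 1) - ψ r))
          + ∑ r ∈ Finset.Ioc j s, (ψ (r + 1) - ψ r) = E := by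
        rw [Finset.sum_Ioc_consecutive _ (Nat.zero_le j) hj.2]; rw [hE]; exact htel s
      have htail : ∑ r ∈ Finset.Ioc j s, (ψ (r + 1) - ψ r) ≤ ((s - j : ℕ) : ℝ) * (2 * Amax) := by
        calc ∑ r ∈ Finset.Ioc j s, (ψ (r + 1) - ψ r)
            ≤ ∑ _r ∈ Finset.Ioc j s, 2 * Amax :=
              Finset.sum_le_sum (fun r hr => (hε r (by simp [Finset.mem_Ioc] at hr; omega)).2)
          _ = ((s - j : ℕ) : ℝ) * (2 * Amax) := by
              rw [Finset.sum_const, Nat.card_Ioc, nsmul_eq_mul]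
      have hsj : ((s - j : ℕ) : ℝ) ≤ E / (4 * Amax) := by
        have h1 : s - j ≤ ⌊E / (4 * Amax)⌋₊ := by omega
        calc ((s - j : ℕ) : ℝ) ≤ (⌊E / (4 * Amax)⌋₊ : ℝ) := by exact_mod_cast h1
          _ ≤ E / (4 * Amax) := Nat.floor_le (by positivity)
      have hhalf : ((s - j : ℕ) : ℝ) * (2 * Amax) ≤ E / 2 := by
        calc ((s - j : ℕ) : ℝ) * (2 * Amax) ≤ (E / (4 * Amax)) * (2 * Amax) := by nlinarith
          _ = E / 2 := by field_simp; ring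
      linarith
    have hsum : (t : ℝ) * (E / 2)
        ≤ ∑ j ∈ Finset.Ioc 0 s, ∑ r ∈ Finset.Ioc 0 j, (ψ (r + 1) - ψ r) := by
      have hsub : Finset.Icc (s + 1 - t) s ⊆ Finset.Ioc 0 s := by
        intro j hj
        simp only [Finset.mem_Icc] at hj
        simp only [Finset.mem_Ioc]
        omega
      have hnn : ∀ j ∈ Finset.Ioc 0 s, j ∉ Finset.Icc (s + 1 - t) s →
          0 ≤ ∑ r ∈ Finset.Ioc 0 j, (ψ (r + 1) - ψ r) := by
        intro j _ _
        exact Finset.sum_nonneg fun r hr =>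
          (hε r (by simp [Finset.mem_Ioc] at hr; omega)).1
      calc (t : ℝ) * (E / 2) = ∑ _j ∈ Finset.Icc (s + 1 - t) s, E / 2 := by
            rw [Finset.sum_const, Nat.card_Icc, nsmul_eq_mul]
            have : s + 1 - (s + 1 - t) = t := by omega
            rw [this]
        _ ≤ ∑ j ∈ Finset.Icc (s + 1 - t) s, ∑ r ∈ Finset.Ioc 0 j, (ψ (r + 1) - ψ r) :=
            Finset.sum_le_sum hPj
        _ ≤ _ := Finset.sum_le_sum_of_subset_of_nonneg hsub hnn
    have hkey : E ^ 2 / (8 * Amax)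
        ≤ ∑ r ∈ Finset.Icc 1 s, ((s - r + 1 : ℕ) : ℝ) * (ψ (r + 1) - ψ r) := by
      rw [← hswap]
      have hlt : E / (4 * Amax) < (t : ℝ) := by
        have := Nat.lt_floor_add_one (E / (4 * Amax))
        rw [ht]; push_cast; linarith
      calc E ^ 2 / (8 * Amax) = (E / (4 * Amax)) * (E / 2) := by field_simp; ring
        _ ≤ (t : ℝ) * (E / 2) := by nlinarith
        _ ≤ _ := hsum
    have hSg := hT s hs
    have hfin : E ^ 2 ≤ (3 * Amax) ^ 2 * D := by
      have h1 : E ^ 2 / (8 * Amax) ≤ Amax * D := by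
        have h2 : Amax * (1 / Amax
            * ∑ r ∈ Finset.Icc 1 s, ((s - r + 1 : ℕ) : ℝ) * (ψ (r + 1) - ψ r))
            = ∑ r ∈ Finset.Icc 1 s, ((s - r + 1 : ℕ) : ℝ) * (ψ (r + 1) - ψ r) := by
          field_simp
        nlinarith [mul_le_mul_of_nonneg_left hSg hAmax.le]
      rw [div_le_iff₀ (by linarith : (0:ℝ) < 8 * Amax)] at h1
      nlinarith [mul_nonneg (mul_nonneg hAmax.le hAmax.le) hDnn]
    calc E = Real.sqrt (E ^ 2) := (Real.sqrt_sq hEpos.le).symm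
      _ ≤ Real.sqrt ((3 * Amax) ^ 2 * D) := Real.sqrt_le_sqrt hfin
      _ = 3 * Amax * Real.sqrt D := by
          rw [Real.sqrt_mul (by positivity), Real.sqrt_sq (by positivity)]
end

section
/- In the identity case A = I_n with integer iterates, suppose round t is a split (j,i) round and round t+1 is a sync (j,j) round, with ties broken by a fixed permutation σ_y. Then ε = ψ^{(t+1)} − ψ^{(t)} equals 0 if σ_y(i) > σ_y(j), and equals 1 if σ_y(i) < σ_y(j). -/
/-- Identity case, split → sync transition: if round t is a split (j,i) round and
round t+1 is a sync (j,j) round, then the duality gap increase ε is 0 if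
σ_y(i) > σ_y(j), and 1 if σ_y(i) < σ_y(j). -/
theorem identity_split_to_sync_gap {n : ℕ} (σx σy : Equiv.Perm (Fin n))
    (p q : Fin n → ℤ) (i j : Fin n) (hij : j ≠ i)
    -- round t is split (j,i): x plays j (min of p at j),
    -- y plays i (lexicographic argmax of q)
    (hxmin : ∀ h, p j ≤ p h)
    (hymax : ∀ h, q h ≤ q i) (hytie : ∀ h, q h = q i → σy i ≤ σy h)
    -- updates: p' = p + e_i, q' = q + e_j
    (p' q' : Fin n → ℤ)
    (hp' : p' = fun h => p h + if h = i then 1 else 0)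
    (hq' : q' = fun h => q h + if h = j then 1 else 0)
    -- round t+1 is sync (j,j): x plays j (min of p' at j),
    -- y plays j (lexicographic argmax of q')
    (hxmin' : ∀ h, p' j ≤ p' h)
    (hymax' : ∀ h, q' h ≤ q' j) (hytie' : ∀ h, q' h = q' j → σy j ≤ σy h) :
    (σy j < σy i → (q' j - p' j) - (q i - p j) = 0) ∧
    (σy i < σy j → (q' j - p' j) - (q i - p j) = 1) := by
  subst hp' hq'
  have h3 := hymax' i
  have h4 := hymax j
  simp only [if_pos rfl, if_neg hij, if_neg (Ne.symm hij), eq_self_iff_true, if_true] at h3 ⊢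
  constructor
  · intro hlt
    have h1 : q j ≠ q i := fun h => absurd (hytie j h) (not_le.mpr hlt)
    omega
  · intro hlt
    have h1 : q i ≠ q j + 1 := by
      intro h
      have := hytie' i (by simp [Ne.symm hij, h])
      exact absurd this (not_le.mpr hlt)
    omega
end
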